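/- arXiv:2309.11124 — 3 statements merged into one kernel-verified Lean document; each statement's English description precedes it below -/
import Mathlib

section
/- There exists a discrete-time system and a set A that is 2-step control invariant but not control invariant (not 1-step control invariant). -/
open Set

variable {α β : Type*}

/-- `x` is an equilibrium state: it lies in `X` and can be held fixed by some admissible control. -/
def IsEquilibrium (f : α → β → α) (X : Set α) (U : Set β) (x : α) : Prop :=
  x ∈ X ∧ ∃ u ∈ U, f x u = x

/-- Infinite-time backward-reachable set of the equilibrium set `S`:
states in `X` from which some admissible trajectory staying in `X` reaches an equilibrium. -/
def BackReach (f : α → β → α) (X : Set α) (U : Set β) : Set α :=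
  {x0 | x0 ∈ X ∧ ∃ (k : ℕ) (x : ℕ → α) (u : ℕ → β),
    x 0 = x0 ∧ (∀ i ≤ k, x (i + 1) = f (x i) (u i)) ∧
    (∀ i ≤ k, x i ∈ X) ∧ (∀ i ≤ k, u i ∈ U) ∧
    IsEquilibrium f X U (x (k + 1))}

/-- Classic control invariance of `A`. -/
def CtrlInv (f : α → β → α) (U : Set β) (A : Set α) : Prop :=
  ∀ x ∈ A, ∃ u ∈ U, f x u ∈ A

/-- `N`-step control invariance of `A ⊆ X`. -/
def NStepInv (f : α → β → α) (X : Set α) (U : Set β) (N : ℕ) (A : Set α) : Prop :=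
  ∀ x0 ∈ A, ∃ (k : ℕ) (x : ℕ → α) (u : ℕ → β), 1 ≤ k ∧ k ≤ N ∧
    x 0 = x0 ∧ (∀ i < k, x (i + 1) = f (x i) (u i)) ∧
    (∀ i < k, x i ∈ X) ∧ (∀ i < k, u i ∈ U) ∧ x k ∈ A

open Function

section

variable {f : α → β → α} {X : Set α} {U : Set β} {A : Set α}

theorem nStepInv_of_isPeriodicPt {N : ℕ} (hN : 1 ≤ N) {u : β} (hu : u ∈ U)
    (hX : ∀ x ∈ A, ∀ i < N, (f · u)^[i] x ∈ X) (hA : ∀ x ∈ A, IsPeriodicPt (f · u) N x) :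
    NStepInv f X U N A := by
  intro x₀ hx₀
  refine ⟨N, fun i => (f · u)^[i] x₀, fun _ => u, hN, le_rfl, rfl,
    fun i _ => iterate_succ_apply' _ i x₀, hX x₀ hx₀, fun _ _ => hu, ?_⟩
  simpa only [(hA x₀ hx₀).eq] using hx₀

theorem nStepInv_one_iff : NStepInv f X U 1 A ↔ A ⊆ X ∧ CtrlInv f U A := by
  constructor
  · intro h
    refine ⟨fun x₀ hx₀ => ?_, fun x₀ hx₀ => ?_⟩ <;>
      obtain ⟨k, x, u, hk₁, hk, rfl, hstep, hX, hU, hA⟩ := h x₀ hx₀ <;>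
      obtain rfl : k = 1 := le_antisymm hk hk₁
    · exact hX 0 one_pos
    · exact ⟨u 0, hU 0 one_pos, hstep 0 one_pos ▸ hA⟩
  · rintro ⟨hAX, hinv⟩ x₀ hx₀
    obtain ⟨u, hu, hfu⟩ := hinv x₀ hx₀
    refine ⟨1, fun i => (f · u)^[i] x₀, fun _ => u, le_rfl, le_rfl, rfl,
      fun i _ => iterate_succ_apply' _ i x₀, ?_, fun _ _ => hu, hfu⟩
    intro i hi
    obtain rfl : i = 0 := Nat.lt_one_iff.mp hi
    exact hAX hx₀

end

/-- There is a system and a set `A` that is 2-step control invariant but not control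
invariant (not 1-step control invariant). -/
theorem exists_twoStep_not_oneStep :
    ∃ (f : Fin 2 → Unit → Fin 2) (X : Set (Fin 2)) (U : Set Unit) (A : Set (Fin 2)),
      NStepInv f X U 2 A ∧ ¬ NStepInv f X U 1 A := by
  refine ⟨fun x _ => x + 1, univ, univ, {0}, ?_, ?_⟩
  · refine nStepInv_of_isPeriodicPt one_le_two (mem_univ ()) (fun _ _ _ _ => mem_univ _) ?_
    rintro x rfl
    rfl
  · rw [nStepInv_one_iff]
    rintro ⟨-, hinv⟩
    obtain ⟨u, -, hu⟩ := hinv 0 rfl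
    simp at hu
end

section
/- If A ⊆ X is N-step control invariant, then from any initial state x_0 ∈ A there exists an infinite admissible control sequence whose trajectory remains in X for all time and visits A infinitely often (with gaps between consecutive visits at most N). -/
open Set

variable {α β : Type*}

/-! From each point `a ∈ A` there is an admissible run of length `1 ≤ K a ≤ N` ending at a
point `next a ∈ A`. Concatenating these runs along the orbit `a₀, next a₀, next (next a₀), …`
gives the infinite trajectory, and consecutive run boundaries lie at most `N` steps apart.
To avoid summing lengths, time `t` is tracked by the pair (current run, position inside it),
which either advances by one or jumps to the start of the next run. -/

section SegmentIndex

variable {σ : Type*} (next : σ → σ) (len : σ → ℕ) (a₀ : σ)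

def segmentIndex : ℕ → σ × ℕ
  | 0 => (a₀, 0)
  | t + 1 =>
    let p := segmentIndex t
    if p.2 + 1 < len p.1 then (p.1, p.2 + 1) else (next p.1, 0)

variable {next len a₀} {t d j : ℕ} {a : σ}

theorem segmentIndex_succ_of_lt (ht : segmentIndex next len a₀ t = (a, j)) (h : j + 1 < len a) :
    segmentIndex next len a₀ (t + 1) = (a, j + 1) := by
  simp only [segmentIndex, ht, if_pos h]

theorem segmentIndex_succ_of_not_lt (ht : segmentIndex next len a₀ t = (a, j))
    (h : ¬j + 1 < len a) : segmentIndex next len a₀ (t + 1) = (next a, 0) := by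
  simp only [segmentIndex, ht, if_neg h]

theorem segmentIndex_snd_lt (hlen : ∀ a, 0 < len a) (ht : segmentIndex next len a₀ t = (a, j)) :
    j < len a := by
  cases t with
  | zero =>
    cases ht
    exact hlen a₀
  | succ t =>
    rcases hp : segmentIndex next len a₀ t with ⟨b, i⟩
    by_cases h : i + 1 < len b
    · cases (segmentIndex_succ_of_lt hp h).symm.trans ht
      exact h
    · cases (segmentIndex_succ_of_not_lt hp h).symm.trans ht
      exact hlen _

theorem segmentIndex_add_eq_next (ht : segmentIndex next len a₀ t = (a, j))
    (hd : j + d + 1 = len a) : segmentIndex next len a₀ (t + (d + 1)) = (next a, 0) := by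
  induction d generalizing t j with
  | zero => exact segmentIndex_succ_of_not_lt ht (by omega)
  | succ d ih =>
    rw [show t + (d + 1 + 1) = t + 1 + (d + 1) by ring]
    exact ih (segmentIndex_succ_of_lt ht (by omega)) (by omega)

theorem exists_segmentIndex_eq_next (hlen : ∀ a, 0 < len a)
    (ht : segmentIndex next len a₀ t = (a, j)) :
    ∃ s, t < s ∧ s ≤ t + len a ∧ segmentIndex next len a₀ s = (next a, 0) := by
  obtain ⟨d, hd⟩ := Nat.exists_eq_add_of_lt (segmentIndex_snd_lt hlen ht)
  exact ⟨t + (d + 1), by omega, by omega, segmentIndex_add_eq_next ht hd.symm⟩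

theorem uncurry_comp_segmentIndex_succ {f : α → β → α} {xs : σ → ℕ → α} {us : σ → ℕ → β}
    (hlen : ∀ a, 0 < len a) (hdyn : ∀ a, ∀ i < len a, xs a (i + 1) = f (xs a i) (us a i))
    (hnext : ∀ a, xs (next a) 0 = xs a (len a)) (t : ℕ) :
    (xs.uncurry ∘ segmentIndex next len a₀) (t + 1) =
      f ((xs.uncurry ∘ segmentIndex next len a₀) t)
        ((us.uncurry ∘ segmentIndex next len a₀) t) := by
  rcases ht : segmentIndex next len a₀ t with ⟨a, j⟩
  have hj : j < len a := segmentIndex_snd_lt hlen ht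
  by_cases h : j + 1 < len a
  · simp only [Function.comp_apply, segmentIndex_succ_of_lt ht h, ht,
      Function.uncurry_apply_pair]
    exact hdyn a j hj
  · simp only [Function.comp_apply, segmentIndex_succ_of_not_lt ht h, ht,
      Function.uncurry_apply_pair, hnext, show len a = j + 1 by omega]
    exact hdyn a j hj

end SegmentIndex

theorem nStepInv_infinitely_visits_general (f : α → β → α) (X : Set α) (U : Set β) (A : Set α)
    (N : ℕ) (hA : NStepInv f X U N A) :
    ∀ x0 ∈ A, ∃ (x : ℕ → α) (u : ℕ → β), x 0 = x0 ∧
      (∀ t, x (t + 1) = f (x t) (u t)) ∧ (∀ t, x t ∈ X) ∧ (∀ t, u t ∈ U) ∧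
      (∀ t, ∃ s, t < s ∧ s ≤ t + N ∧ x s ∈ A) := by
  intro x0 hx0
  choose K xs us hK1 hKN hstart hdyn hX hU hend using hA
  let next (a : A) : A := ⟨xs a a.2 (K a a.2), hend a a.2⟩
  let p := segmentIndex next (fun a => K a a.2) ⟨x0, hx0⟩
  have hlen (a : A) : 0 < K a a.2 := hK1 a a.2
  have hlt (t : ℕ) : (p t).2 < K (p t).1 (p t).1.2 := segmentIndex_snd_lt hlen rfl
  refine ⟨(fun a : A => xs a a.2).uncurry ∘ p, (fun a : A => us a a.2).uncurry ∘ p,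
    hstart x0 hx0, uncurry_comp_segmentIndex_succ hlen (fun a => hdyn a a.2) (fun a => hstart _ _),
    fun t => hX _ _ _ (hlt t), fun t => hU _ _ _ (hlt t), fun t => ?_⟩
  obtain ⟨s, hts, hsK, hs⟩ := exists_segmentIndex_eq_next hlen (rfl : p t = ((p t).1, (p t).2))
  refine ⟨s, hts, hsK.trans (Nat.add_le_add_left (hKN _ _) t), ?_⟩
  simp only [Function.comp_apply, p, hs, Function.uncurry_apply_pair, hstart]
  exact (next (p t).1).2

/-- From any state of an `N`-step control invariant set `A ⊆ X` there is an infinite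
admissible trajectory staying in `X` and visiting `A` with gaps at most `N`. -/
theorem nStepInv_infinitely_visits (f : α → β → α) (X : Set α) (U : Set β) (A : Set α)
    (N : ℕ) (hAX : A ⊆ X) (hA : NStepInv f X U N A) :
    ∀ x0 ∈ A, ∃ (x : ℕ → α) (u : ℕ → β), x 0 = x0 ∧
      (∀ t, x (t + 1) = f (x t) (u t)) ∧ (∀ t, x t ∈ X) ∧ (∀ t, u t ∈ U) ∧
      (∀ t, ∃ s, t < s ∧ s ≤ t + N ∧ x s ∈ A) :=
  nStepInv_infinitely_visits_general f X U A N hA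
end

section
/- If A ⊆ X is N-step control invariant, then every state in A is safe: there exists an infinite admissible control sequence from any x_0 ∈ A such that the entire trajectory satisfies the state constraints x_t ∈ X for all t ∈ ℕ. -/
open Set

variable {α β : Type*}

/-- Every state of an `N`-step control invariant set `A ⊆ X` is safe: some infinite
admissible trajectory from it satisfies the state constraints forever. -/
theorem nStepInv_safe (f : α → β → α) (X : Set α) (U : Set β) (A : Set α)
    (N : ℕ) (hAX : A ⊆ X) (hA : NStepInv f X U N A) :
    ∀ x0 ∈ A, ∃ (x : ℕ → α) (u : ℕ → β), x 0 = x0 ∧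
      (∀ t, x (t + 1) = f (x t) (u t)) ∧ (∀ t, u t ∈ U) ∧ (∀ t, x t ∈ X) := by
  classical
  intro x0 hx0
  have h : ∀ a : {a : α // a ∈ A}, ∃ (k : ℕ) (x : ℕ → α) (u : ℕ → β), 1 ≤ k ∧ k ≤ N ∧
      x 0 = (a : α) ∧ (∀ i < k, x (i + 1) = f (x i) (u i)) ∧
      (∀ i < k, x i ∈ X) ∧ (∀ i < k, u i ∈ U) ∧ x k ∈ A := fun a => hA a a.2
  choose k xs us hk1 _ hx0' hdyn hX hU hend using h
  set next : {a : α // a ∈ A} → {a : α // a ∈ A} := fun a => ⟨xs a (k a), hend a⟩ with hnext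
  set seq : ℕ → {a : α // a ∈ A} := fun n => next^[n] ⟨x0, hx0⟩ with hseq
  have hseqsucc : ∀ n, seq (n + 1) = next (seq n) := fun n => Function.iterate_succ_apply' _ _ _
  -- cumulative times
  set T : ℕ → ℕ := fun n => Nat.rec 0 (fun m Tm => Tm + k (seq m)) n with hT
  have hT0 : T 0 = 0 := rfl
  have hTs : ∀ n, T (n + 1) = T n + k (seq n) := fun n => rfl
  have hTmono : StrictMono T := strictMono_nat_of_lt_succ (fun n => by
    have h1 := hk1 (seq n); have h2 := hTs n; omega)
  have hTbig : ∀ t, t < T (t + 1) := by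
    intro t
    have : t + 1 ≤ T (t + 1) := by
      induction t with
      | zero => have := hk1 (seq 0); have h2 := hTs 0; omega
      | succ m ih => have := hk1 (seq (m + 1)); have h2 := hTs (m + 1); omega
    omega
  have hex : ∀ t, ∃ n, t < T (n + 1) := fun t => ⟨t, hTbig t⟩
  set m : ℕ → ℕ := fun t => Nat.find (hex t) with hm
  have hmub : ∀ t, t < T (m t + 1) := fun t => Nat.find_spec (hex t)
  have hfind_min : ∀ t n, n < m t → T (n + 1) ≤ t := by
    intro t n hn
    have := Nat.find_min (hex t) (show n < Nat.find (hex t) from hn)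
    omega
  have hmlb : ∀ t, T (m t) ≤ t := by
    intro t
    rcases Nat.eq_zero_or_pos (m t) with h0 | hpos
    · rw [h0, hT0]; omega
    · have h2 := hfind_min t (m t - 1) (by omega)
      have h1 : m t - 1 + 1 = m t := by omega
      rw [h1] at h2; exact h2
  have hmuniq : ∀ t n, T n ≤ t → t < T (n + 1) → m t = n := by
    intro t n h1 h2
    have hle : m t ≤ n := Nat.find_le h2
    rcases lt_or_eq_of_le hle with hlt | heq
    · have h3 : T (m t + 1) ≤ T n := hTmono.monotone (show m t + 1 ≤ n by omega)
      have h4 := hmub t; omega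
    · exact heq
  set x : ℕ → α := fun t => xs (seq (m t)) (t - T (m t)) with hx
  set u : ℕ → β := fun t => us (seq (m t)) (t - T (m t)) with hu
  have hdlt : ∀ t, t - T (m t) < k (seq (m t)) := by
    intro t
    have h1 := hmlb t; have h2 := hmub t; have h3 := hTs (m t); omega
  refine ⟨x, u, ?_, ?_, fun t => hU _ _ (hdlt t), fun t => hX _ _ (hdlt t)⟩
  · have hm0 : m 0 = 0 := by
      refine hmuniq 0 0 (by rw [hT0]) ?_
      have := hk1 (seq 0); have h2 := hTs 0; omega
    simp only [hx, hm0, hT0, Nat.sub_zero]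
    exact hx0' (seq 0)
  · intro t
    have h1 := hmlb t
    have h2 := hmub t
    rcases lt_or_eq_of_le (Nat.succ_le_of_lt h2) with hlt | heq
    · -- t + 1 still in segment m t
      have hm1 : m (t + 1) = m t := hmuniq (t + 1) (m t) (by omega) hlt
      have hd : t + 1 - T (m t) = (t - T (m t)) + 1 := by omega
      simp only [hx, hu, hm1, hd]
      exact hdyn (seq (m t)) _ (hdlt t)
    · -- t + 1 = T (m t + 1), move to next segment
      have hm1 : m (t + 1) = m t + 1 := by
        refine hmuniq (t + 1) (m t + 1) (by omega) ?_
        have h3 := hTs (m t + 1); have h4 := hk1 (seq (m t + 1)); omega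
      have hdk : t - T (m t) + 1 = k (seq (m t)) := by
        have h3 := hTs (m t); omega
      have hstart : xs (seq (m t + 1)) 0 = xs (seq (m t)) (k (seq (m t))) := by
        rw [hx0' (seq (m t + 1)), hseqsucc (m t)]
      have hzero : t + 1 - T (m t + 1) = 0 := by omega
      simp only [hx, hu, hm1, hzero, hstart, ← hdk]
      exact hdyn (seq (m t)) _ (hdlt t)
end
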